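/- arXiv:2206.04143 — 3 statements merged into one kernel-verified Lean document; each statement's English description precedes it below -/
import Mathlib

section
/- Let G be a group acting by homeomorphisms on a paracompact Hausdorff topological space X and acting on an index set I. Let U : I → Set X be a locally finite family of open sets and A : I → Set X a family of closed sets such that A i ⊆ U i for every i ∈ I, the sets A i cover X, and the data is G-equivariant: g • (U i) = U (g • i) and g • (A i) = A (g • i) for all g ∈ G and i ∈ I. Assume that for every i ∈ I the stabilizer {g ∈ G | g • i = i} is finite. Then there exists a G-invariant partition of unity subordinate to U: a family φ : I → (X → ℝ) of continuous functions with 0 ≤ φ i x ≤ 1, whose supports form a locally finite family with the closed support of φ i contained in U i, such that ∑ i, φ i x = 1 for every x ∈ X, such that φ i is strictly positive at every point of A i, and which is G-invariant in the sense that φ (g • i) (g • x) = φ i x for all g ∈ G, i ∈ I, and x ∈ X. -/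
open Pointwise

/-- Equivariant partition of unity subordinate to a `G`-invariant locally finite open
covering `U` with a `G`-invariant closed refinement `A`, assuming finite stabilizers. -/
theorem stmt0 {G X I : Type*} [Group G] [TopologicalSpace X]
    [ParacompactSpace X] [T2Space X]
    [MulAction G X] [ContinuousConstSMul G X] [MulAction G I]
    (U : I → Set X) (A : I → Set X)
    (hUopen : ∀ i, IsOpen (U i)) (hAclosed : ∀ i, IsClosed (A i))
    (hLF : LocallyFinite U)
    (hAU : ∀ i, A i ⊆ U i)
    (hcover : ⋃ i, A i = Set.univ)
    (hUeq : ∀ (g : G) (i : I), g • U i = U (g • i))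
    (hAeq : ∀ (g : G) (i : I), g • A i = A (g • i))
    (hstab : ∀ i : I, {g : G | g • i = i}.Finite) :
    ∃ φ : I → X → ℝ,
      (∀ i, Continuous (φ i)) ∧
      (∀ i x, 0 ≤ φ i x) ∧ (∀ i x, φ i x ≤ 1) ∧
      LocallyFinite (fun i => Function.support (φ i)) ∧
      (∀ i, tsupport (φ i) ⊆ U i) ∧
      (∀ x, ∑' i, φ i x = 1) ∧
      (∀ i, ∀ x ∈ A i, 0 < φ i x) ∧
      (∀ (g : G) (i : I) (x : X), φ (g • i) (g • x) = φ i x) := by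
  classical
  -- Step 1: Urysohn bump functions
  have urysohn : ∀ i : I, ∃ f : X → ℝ, Continuous f ∧ tsupport f ⊆ U i ∧
      Set.EqOn f 1 (A i) ∧ ∀ x, f x ∈ Set.Icc (0 : ℝ) 1 := by
    intro i
    obtain ⟨V, hVopen, hAV, hVU⟩ :=
      normal_exists_closure_subset (hAclosed i) (hUopen i) (hAU i)
    obtain ⟨f, hf0, hf1, hf01⟩ := exists_continuous_zero_one_of_isClosed
      (isClosed_compl_iff.mpr hVopen) (hAclosed i)
      (Set.disjoint_left.mpr fun x hx hxA => hx (hAV hxA))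
    refine ⟨f, f.continuous, ?_, hf1, hf01⟩
    have hsupp : Function.support f ⊆ V := by
      intro x hx
      by_contra hxV
      exact hx (hf0 hxV)
    exact (closure_mono hsupp).trans hVU
  choose f hfc hfsupp hfA hf01 using urysohn
  -- Step 2: orbit representatives
  set rel := MulAction.orbitRel G I with hrel
  set rep : I → I := fun i => (Quotient.mk rel i).out with hrepdef
  have hrep_smul : ∀ (g : G) (i : I), rep (g • i) = rep i := by
    intro g i
    have : (Quotient.mk rel (g • i)) = Quotient.mk rel i :=
      Quotient.sound (MulAction.orbitRel_apply.mpr (MulAction.mem_orbit i g))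
    simp only [hrepdef, this]
  have hrep_orbit : ∀ i : I, ∃ g : G, g • i = rep i := by
    intro i
    have h := Quotient.mk_out (s := rel) i
    rw [hrel, MulAction.orbitRel_apply, MulAction.mem_orbit_iff] at h
    exact h
  choose σ hσ using hrep_orbit
  have hσinv : ∀ i, (σ i)⁻¹ • rep i = i := by
    intro i; rw [← hσ i, inv_smul_smul]
  -- Step 3: symmetrize over finite stabilizers
  set S : I → Finset G := fun r => (hstab r).toFinset with hSdef
  have hSmem : ∀ (r : I) (g : G), g ∈ S r ↔ g • r = r := by
    intro r g; simp [hSdef, Set.Finite.mem_toFinset]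
  have h1S : ∀ r : I, (1 : G) ∈ S r := fun r => (hSmem r 1).mpr (one_smul _ _)
  set F : I → X → ℝ := fun r x => ∑ s ∈ S r, f r (s⁻¹ • x) with hFdef
  have hFc : ∀ r, Continuous (F r) :=
    fun r => continuous_finset_sum _ fun s _ => (hfc r).comp (continuous_const_smul _)
  have hFnonneg : ∀ r x, 0 ≤ F r x :=
    fun r x => Finset.sum_nonneg fun s _ => (hf01 r _).1
  -- invariance of F r under the stabilizer of r
  have hFinv : ∀ (r : I) (s : G), s • r = r → ∀ y, F r (s • y) = F r y := by
    intro r s hs y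
    simp only [hFdef]
    refine Finset.sum_nbij' (fun t => s⁻¹ * t) (fun t => s * t) ?_ ?_ ?_ ?_ ?_
    · intro t ht
      rw [hSmem] at ht ⊢
      rw [mul_smul, ht, inv_smul_eq_iff, hs]
    · intro t ht
      rw [hSmem] at ht ⊢
      rw [mul_smul, ht, hs]
    · intro t _; simp
    · intro t _; simp
    · intro t _
      congr 1
      rw [mul_inv_rev, inv_inv, mul_smul]
  -- Step 4: the equivariant (unnormalized) functions
  set ψ : I → X → ℝ := fun i x => F (rep i) (σ i • x) with hψdef
  have hψc : ∀ i, Continuous (ψ i) :=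
    fun i => (hFc (rep i)).comp (continuous_const_smul _)
  have hψnonneg : ∀ i x, 0 ≤ ψ i x := fun i x => hFnonneg _ _
  -- replacing σ i by any other element carrying i to rep i gives the same value
  have hFrep : ∀ (i : I) (a : G), a • i = rep i → ∀ x, F (rep i) (a • x) = ψ i x := by
    intro i a ha x
    have hs : (a * (σ i)⁻¹) • rep i = rep i := by
      rw [mul_smul, hσinv i, ha]
    have h := hFinv (rep i) _ hs (σ i • x)
    have hax : (a * (σ i)⁻¹) • σ i • x = a • x := by
      rw [mul_smul, inv_smul_smul]
    rw [hax] at h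
    exact h
  -- equivariance of ψ
  have hψeq : ∀ (g : G) (i : I) (x : X), ψ (g • i) (g • x) = ψ i x := by
    intro g i x
    have hrg := hrep_smul g i
    have h1 : ψ (g • i) (g • x) = F (rep i) ((σ (g • i) * g) • x) := by
      simp only [hψdef, hrg, mul_smul]
    have h2 : (σ (g • i) * g) • i = rep i := by
      rw [mul_smul, hσ (g • i), hrg]
    rw [h1, hFrep i _ h2 x]
  -- supports
  have hψsuppU : ∀ i, tsupport (ψ i) ⊆ U i := by
    intro i
    set r := rep i with hr
    set T : Set X := ⋃ s ∈ S r, s • tsupport (f r) with hTdef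
    have hTclosed : IsClosed T :=
      Set.Finite.isClosed_biUnion (S r).finite_toSet
        fun s _ => (isClosed_tsupport (f r)).smul s
    have hTU : T ⊆ U r := by
      refine Set.iUnion₂_subset fun s hs => ?_
      calc s • tsupport (f r) ⊆ s • U r := Set.smul_set_mono (hfsupp r)
        _ = U (s • r) := hUeq s r
        _ = U r := by rw [(hSmem r s).mp hs]
    have hsuppsub : Function.support (ψ i) ⊆ (σ i)⁻¹ • T := by
      intro x hx
      obtain ⟨s, hsmem, hne⟩ := Finset.exists_ne_zero_of_sum_ne_zero hx
      have hmem : s⁻¹ • σ i • x ∈ tsupport (f r) := subset_closure hne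
      refine Set.mem_smul_set.mpr ⟨σ i • x, ?_, by rw [inv_smul_smul]⟩
      refine Set.mem_biUnion hsmem ?_
      exact Set.mem_smul_set.mpr ⟨s⁻¹ • σ i • x, hmem, by rw [smul_inv_smul]⟩
    have h1 : tsupport (ψ i) ⊆ (σ i)⁻¹ • T :=
      closure_minimal hsuppsub (hTclosed.smul _)
    refine h1.trans ?_
    calc (σ i)⁻¹ • T ⊆ (σ i)⁻¹ • U r := Set.smul_set_mono hTU
      _ = U ((σ i)⁻¹ • r) := hUeq _ _
      _ = U i := by rw [hσinv i]
  have hψsuppU' : ∀ i, Function.support (ψ i) ⊆ U i :=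
    fun i => (subset_tsupport _).trans (hψsuppU i)
  -- positivity on A i
  have hψpos : ∀ i, ∀ x ∈ A i, 0 < ψ i x := by
    intro i x hx
    have hx' : σ i • x ∈ A (rep i) := by
      rw [← hσ i, ← hAeq]
      exact Set.smul_mem_smul_set hx
    refine Finset.sum_pos' (fun s _ => (hf01 _ _).1) ⟨1, h1S _, ?_⟩
    have : f (rep i) ((1 : G)⁻¹ • σ i • x) = 1 := by
      rw [inv_one, one_smul]
      exact hfA (rep i) hx'
    rw [this]; norm_num
  -- local finiteness
  have hψLF : LocallyFinite (fun i => Function.support (ψ i)) :=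
    hLF.subset hψsuppU'
  -- normalization
  set Sig : X → ℝ := fun x => ∑ᶠ i, ψ i x with hSigdef
  have hSigc : Continuous Sig := continuous_finsum hψc hψLF
  have hfin : ∀ x : X, (Function.support fun i => ψ i x).Finite := by
    intro x
    refine (hLF.point_finite x).subset fun i hi => ?_
    exact hψsuppU' i hi
  have hSigpos : ∀ x, 0 < Sig x := by
    intro x
    have hxA : x ∈ ⋃ i, A i := by rw [hcover]; trivial
    obtain ⟨_, ⟨i, rfl⟩, hi⟩ := hxA
    have hpos := hψpos i x hi
    show 0 < ∑ᶠ i, ψ i x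
    rw [finsum_eq_sum _ (hfin x)]
    refine Finset.sum_pos' (fun j _ => hψnonneg j x) ⟨i, ?_, hpos⟩
    rw [Set.Finite.mem_toFinset]
    exact ne_of_gt hpos
  have hψle : ∀ i x, ψ i x ≤ Sig x := by
    intro i x
    by_cases h : ψ i x = 0
    · rw [h]; exact (hSigpos x).le
    · show ψ i x ≤ ∑ᶠ i, ψ i x
      rw [finsum_eq_sum _ (hfin x)]
      refine Finset.single_le_sum (fun j _ => hψnonneg j x) ?_
      rw [Set.Finite.mem_toFinset]; exact h
  have hSigeq : ∀ (g : G) (x : X), Sig (g • x) = Sig x := by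
    intro g x
    have h1 : ∑ᶠ i, ψ (g • i) (g • x) = ∑ᶠ j, ψ j (g • x) :=
      finsum_eq_of_bijective (fun i => g • i) (MulAction.bijective g) fun i => rfl
    calc Sig (g • x) = ∑ᶠ i, ψ (g • i) (g • x) := h1.symm
      _ = ∑ᶠ i, ψ i x := by simp only [hψeq]
      _ = Sig x := rfl
  -- the partition of unity
  refine ⟨fun i x => ψ i x / Sig x, ?_, ?_, ?_, ?_, ?_, ?_, ?_, ?_⟩
  · exact fun i => (hψc i).div hSigc fun x => (hSigpos x).ne'
  · exact fun i x => div_nonneg (hψnonneg i x) (hSigpos x).le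
  · exact fun i x => (div_le_one (hSigpos x)).mpr (hψle i x)
  · refine hψLF.subset fun i => ?_
    intro x hx
    simp only [Function.mem_support] at hx ⊢
    intro h0
    exact hx (by rw [h0, zero_div])
  · intro i
    refine (closure_mono ?_).trans (hψsuppU i)
    intro x hx
    simp only [Function.mem_support] at hx ⊢
    intro h0
    exact hx (by rw [h0, zero_div])
  · intro x
    have hsum : ∑' i, ψ i x / Sig x = ∑ i ∈ (hfin x).toFinset, ψ i x / Sig x := by
      refine tsum_eq_sum fun j hj => ?_
      rw [Set.Finite.mem_toFinset] at hj
      simp only [Function.mem_support, not_not] at hj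
      rw [hj, zero_div]
    rw [hsum, ← Finset.sum_div, ← finsum_eq_sum _ (hfin x)]
    exact div_self (hSigpos x).ne'
  · exact fun i x hx => div_pos (hψpos i x hx) (hSigpos x)
  · intro g i x
    show ψ (g • i) (g • x) / Sig (g • x) = ψ i x / Sig x
    rw [hψeq g i x, hSigeq g x]
end

section
/- Let E be a real vector space, let K ⊆ E be a convex set, let ι be an index set, and for each i ∈ ι let f i and g i be linear functionals E →ₗ[ℝ] ℝ such that f i x ≥ 0 and g i x ≥ 0 for every x ∈ K. Then the set K \ ⋃_{i ∈ ι} {x ∈ E | f i x = 0 ∧ g i x = 0} is convex. -/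
/-- Removing from a convex set a union of codimension-two loci, each the common kernel of
two linear functionals that are nonnegative on the set, preserves convexity. -/
theorem stmt3 {E ι : Type*} [AddCommGroup E] [Module ℝ E]
    (K : Set E) (hK : Convex ℝ K)
    (f g : ι → (E →ₗ[ℝ] ℝ))
    (hf : ∀ i, ∀ x ∈ K, 0 ≤ f i x) (hg : ∀ i, ∀ x ∈ K, 0 ≤ g i x) :
    Convex ℝ (K \ ⋃ i, {x : E | f i x = 0 ∧ g i x = 0}) := by
  rintro x ⟨hxK, hx⟩ y ⟨hyK, hy⟩ a b ha hb hab
  refine ⟨hK hxK hyK ha hb hab, ?_⟩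
  simp only [Set.mem_iUnion, Set.mem_setOf_eq, not_exists, not_and] at hx hy ⊢
  intro i hfz
  simp only [map_add, map_smul, smul_eq_mul] at hfz ⊢
  rcases ha.lt_or_eq with ha' | ha'
  · have h1 : 0 ≤ a * f i x := mul_nonneg ha (hf i x hxK)
    have h2 : 0 ≤ b * f i y := mul_nonneg hb (hf i y hyK)
    have hfx : a * f i x = 0 := le_antisymm (by linarith) h1
    have hfx0 : f i x = 0 := by
      rcases mul_eq_zero.mp hfx with h | h
      · exact absurd h ha'.ne'
      · exact h
    have := hx i hfx0
    intro hgz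
    have h3 : 0 ≤ a * g i x := mul_nonneg ha (hg i x hxK)
    have h4 : 0 ≤ b * g i y := mul_nonneg hb (hg i y hyK)
    have hgx : a * g i x = 0 := le_antisymm (by linarith) h3
    rcases mul_eq_zero.mp hgx with h | h
    · exact absurd h ha'.ne'
    · exact this h
  · have hb1 : b = 1 := by linarith
    subst hb1
    rw [← ha'] at hfz ⊢
    simp only [zero_mul, zero_add, one_mul] at hfz ⊢
    exact hy i hfz
end

section
/- Let s and s' be real numbers with 1 ≤ |s| ≤ |s'| and s ≠ s', let w > 0 and h > 0 be real numbers, and let m_1 < m_2 < ... < m_k be integers. For each j, let p_j ∈ ℝ × ℝ be the unique common point of the lines {(t, s·t) | t ∈ ℝ} and {(t, s'·(t − m_j·w)) | t ∈ ℝ}. If the second coordinates of all the points p_j lie in a common open interval of length h, then h/w > (k − 1)/2. -/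
private lemma mono_gap {k : ℕ} (m : Fin k → ℤ) (hm : StrictMono m) (a b : Fin k)
    (hab : a ≤ b) : ((b : ℕ) : ℤ) - ((a : ℕ) : ℤ) ≤ m b - m a := by
  obtain ⟨n, hn⟩ : ∃ n, (b : ℕ) = (a : ℕ) + n := ⟨(b : ℕ) - (a : ℕ), by
    have := (Fin.le_def).mp hab; omega⟩
  clear hab
  induction n generalizing b with
  | zero =>
    have : a = b := Fin.ext (by omega)
    simp [this]
  | succ n ih =>
    have hb' : (a : ℕ) + n < k := by omega
    have h1 := ih ⟨(a : ℕ) + n, hb'⟩ rfl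
    have h2 : m ⟨(a : ℕ) + n, hb'⟩ < m b := hm (by simp [Fin.lt_def]; omega)
    simp only [Fin.val_mk] at h1
    omega

/-- Modulus bound: if a line of slope `s` (with `1 ≤ |s| ≤ |s'|`, `s ≠ s'`) meets the lines
`y = s'·(x − mⱼ·w)` for strictly increasing integers `m₁ < ⋯ < m_k`, and all intersection
points have second coordinates in a common open interval of length `h`, then
`h/w > (k − 1)/2`. -/
theorem stmt7 (s s' w h : ℝ) (hs : 1 ≤ |s|) (hss' : |s| ≤ |s'|) (hne : s ≠ s')
    (hw : 0 < w) (hh : 0 < h) (k : ℕ) (m : Fin k → ℤ)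
    (hm : StrictMono m) (p : Fin k → ℝ × ℝ)
    (hp : ∀ j, p j ∈ {q : ℝ × ℝ | ∃ t, q = (t, s * t)} ∩
      {q : ℝ × ℝ | ∃ t, q = (t, s' * (t - (m j : ℝ) * w))})
    (hint : ∃ a : ℝ, ∀ j, (p j).2 ∈ Set.Ioo a (a + h)) :
    h / w > ((k : ℝ) - 1) / 2 := by
  by_cases hk : k ≤ 1
  · have hk1 : (k : ℝ) ≤ 1 := by exact_mod_cast hk
    have : 0 < h / w := div_pos hh hw
    linarith
  push_neg at hk
  have hD : s' - s ≠ 0 := sub_ne_zero.mpr (Ne.symm hne)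
  set C : ℝ := s * s' * w / (s' - s) with hC
  have hy : ∀ j, (p j).2 = C * (m j : ℝ) := by
    intro j
    obtain ⟨⟨t, ht⟩, ⟨t', ht'⟩⟩ := hp j
    have htt : t = t' := by
      have := congrArg Prod.fst ht; have := congrArg Prod.fst ht'; simp_all
    subst htt
    have heq : s * t = s' * (t - (m j : ℝ) * w) := by
      have h1 := congrArg Prod.snd ht; have h2 := congrArg Prod.snd ht'; simp_all
    have hts : t = s' * (m j : ℝ) * w / (s' - s) := by
      field_simp
      nlinarith [heq]
    have : (p j).2 = s * t := by rw [ht]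
    rw [this, hts, hC]
    field_simp
  -- lower bound on |C|
  have hs0 : (0:ℝ) < |s| := by linarith
  have hs'0 : (0:ℝ) < |s'| := by linarith
  have hDabs : |s' - s| ≤ 2 * |s| * |s'| := by
    have h1 : |s' - s| ≤ |s'| + |s| := abs_sub _ _
    nlinarith
  have hDpos : 0 < |s' - s| := abs_pos.mpr hD
  have hCabs : w / 2 ≤ |C| := by
    rw [hC, abs_div, abs_mul, abs_mul, abs_of_pos hw]
    rw [div_le_div_iff₀ (by norm_num) hDpos]
    nlinarith
  -- endpoints
  have h0k : 0 < k := by omega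
  have hk1k : k - 1 < k := by omega
  set a0 : Fin k := ⟨0, h0k⟩
  set b0 : Fin k := ⟨k - 1, hk1k⟩
  have hgap : ((k : ℤ) - 1) ≤ m b0 - m a0 := by
    have hthis := mono_gap m hm a0 b0 (by simp [a0, b0, Fin.le_def])
    have hb : (b0 : ℕ) = k - 1 := rfl
    have ha' : (a0 : ℕ) = 0 := rfl
    rw [hb, ha'] at hthis
    omega
  obtain ⟨a, ha⟩ := hint
  have h1 := ha a0
  have h2 := ha b0
  simp only [Set.mem_Ioo] at h1 h2
  have hdiff : |(p b0).2 - (p a0).2| < h := by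
    rw [abs_lt]; constructor <;> linarith [h1.1, h1.2, h2.1, h2.2]
  have hg0 : (0:ℝ) ≤ (m b0 : ℝ) - (m a0 : ℝ) := by
    have : (0:ℤ) ≤ m b0 - m a0 := by omega
    exact_mod_cast this
  have hval : |(p b0).2 - (p a0).2| = |C| * ((m b0 : ℝ) - (m a0 : ℝ)) := by
    rw [hy b0, hy a0, ← mul_sub, abs_mul, abs_of_nonneg hg0]
  have hgapR : ((k : ℝ) - 1) ≤ (m b0 : ℝ) - (m a0 : ℝ) := by
    have : (((k : ℤ) - 1 : ℤ) : ℝ) ≤ ((m b0 - m a0 : ℤ) : ℝ) := Int.cast_le.mpr hgap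
    push_cast at this; linarith
  have hk2 : (2 : ℝ) ≤ (k : ℝ) := by exact_mod_cast hk
  have key : w / 2 * ((k : ℝ) - 1) < h := by
    calc w / 2 * ((k : ℝ) - 1) ≤ |C| * ((m b0 : ℝ) - (m a0 : ℝ)) := by
          apply mul_le_mul hCabs hgapR (by linarith) (le_trans (by linarith) hCabs)
      _ = |(p b0).2 - (p a0).2| := hval.symm
      _ < h := hdiff
  rw [gt_iff_lt, div_lt_div_iff₀ (by norm_num) hw]
  nlinarith
end
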